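/- arXiv:1708.08083 — 6 statements merged into one kernel-verified Lean document; each statement's English description precedes it below -/
import Mathlib

section
/- For every field F, there exist fourteen linear forms u₁,…,u₇, v₁,…,v₇ from the space of 2×2 matrices over F to F, and seven 2×2 matrices W₁,…,W₇ over F, such that for all 2×2 matrices X and Y over F the product satisfies X·Y = Σ_{k=1}^{7} u_k(X)·v_k(Y)·W_k. -/
/-! Strassen's products are `M_k = u_k(X) v_k(Y)`, and `W_k` records with which sign `M_k`
enters each entry of `X * Y`; e.g. `(X * Y) 0 0 = M₁ + M₄ - M₅ + M₇`. Each entry identity is a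
polynomial identity in the eight entries of `X` and `Y`. -/

namespace Matrix

variable (R : Type*) [CommRing R]

local notation "e" => entryLinearMap R R (m := Fin 2) (n := Fin 2)

def strassenLeft : Fin 7 → (Matrix (Fin 2) (Fin 2) R →ₗ[R] R) :=
  ![e 0 0 + e 1 1, e 1 0 + e 1 1, e 0 0, e 1 1, e 0 0 + e 0 1, e 1 0 - e 0 0, e 0 1 - e 1 1]

def strassenRight : Fin 7 → (Matrix (Fin 2) (Fin 2) R →ₗ[R] R) :=
  ![e 0 0 + e 1 1, e 0 0, e 0 1 - e 1 1, e 1 0 - e 0 0, e 1 1, e 0 0 + e 0 1, e 1 0 + e 1 1]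

def strassenOut : Fin 7 → Matrix (Fin 2) (Fin 2) R :=
  ![!![1, 0; 0, 1], !![0, 0; 1, -1], !![0, 1; 0, 1], !![1, 0; 1, 0],
    !![-1, 1; 0, 0], !![0, 0; 0, 1], !![1, 0; 0, 0]]

theorem mul_eq_sum_strassen (X Y : Matrix (Fin 2) (Fin 2) R) :
    X * Y = ∑ k : Fin 7, (strassenLeft R k X * strassenRight R k Y) • strassenOut R k := by
  ext i j
  fin_cases i <;> fin_cases j <;>
    simp [strassenLeft, strassenRight, strassenOut, mul_apply, Fin.sum_univ_succ] <;> ring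

end Matrix

/-- Strassen's algorithm: 2×2 matrix multiplication with 7 bilinear products. -/
theorem strassen_seven_multiplications (F : Type*) [Field F] :
    ∃ (u v : Fin 7 → (Matrix (Fin 2) (Fin 2) F →ₗ[F] F))
      (W : Fin 7 → Matrix (Fin 2) (Fin 2) F),
      ∀ X Y : Matrix (Fin 2) (Fin 2) F,
        X * Y = ∑ k : Fin 7, (u k X * v k Y) • W k :=
  ⟨_, _, _, Matrix.mul_eq_sum_strassen F⟩
end

section
/- For every field F, there exist twenty-one linear forms u₁,…,u₇, v₁,…,v₇, w₁,…,w₇ from the space of 2×2 matrices over F to F such that for all 2×2 matrices X, Y, Z over F one has tr(XYZ) = Σ_{k=1}^{7} u_k(X)·v_k(Y)·w_k(Z). -/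
/-!
Strassen's seven products `M k = u k X * v k Y` satisfy `X * Y = ∑ k, M k • W k` for fixed
matrices `W k`, and pairing with `Z` through `tr (X * Y * Z) = ∑ i j, (X * Y) i j * Z j i`
turns each `W k` into the linear form `w k Z = tr (W k * Z)`.
-/

open Matrix

namespace Strassen

variable (R : Type*) [CommRing R]

local notation "E" => entryLinearMap R R

def leftForms : Fin 7 → Matrix (Fin 2) (Fin 2) R →ₗ[R] R :=
  ![E 0 0 + E 1 1, E 1 0 + E 1 1, E 0 0, E 1 1, E 0 0 + E 0 1, E 1 0 - E 0 0, E 0 1 - E 1 1]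

def middleForms : Fin 7 → Matrix (Fin 2) (Fin 2) R →ₗ[R] R :=
  ![E 0 0 + E 1 1, E 0 0, E 0 1 - E 1 1, E 1 0 - E 0 0, E 1 1, E 0 0 + E 0 1, E 1 0 + E 1 1]

def rightForms : Fin 7 → Matrix (Fin 2) (Fin 2) R →ₗ[R] R :=
  ![E 0 0 + E 1 1, E 0 1 - E 1 1, E 1 0 + E 1 1, E 0 0 + E 0 1, E 1 0 - E 0 0, E 1 1, E 0 0]

variable {R}

theorem trace_mul_mul_fin_two (X Y Z : Matrix (Fin 2) (Fin 2) R) :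
    (X * Y * Z).trace =
      (X 0 0 * Y 0 0 + X 0 1 * Y 1 0) * Z 0 0 + (X 0 0 * Y 0 1 + X 0 1 * Y 1 1) * Z 1 0 +
        ((X 1 0 * Y 0 0 + X 1 1 * Y 1 0) * Z 0 1 + (X 1 0 * Y 0 1 + X 1 1 * Y 1 1) * Z 1 1) := by
  simp only [trace_fin_two, mul_apply, Fin.sum_univ_two]

theorem trace_mul_mul_eq_sum (X Y Z : Matrix (Fin 2) (Fin 2) R) :
    (X * Y * Z).trace =
      ∑ k : Fin 7, leftForms R k X * middleForms R k Y * rightForms R k Z := by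
  rw [trace_mul_mul_fin_two]
  simp only [leftForms, middleForms, rightForms, Fin.sum_univ_succ, Fin.sum_univ_zero,
    cons_val_zero, cons_val_succ, LinearMap.add_apply, LinearMap.sub_apply, entryLinearMap_apply]
  ring

end Strassen

/-- Trilinear formulation of Strassen's algorithm. -/
theorem strassen_trilinear (F : Type*) [Field F] :
    ∃ (u v w : Fin 7 → (Matrix (Fin 2) (Fin 2) F →ₗ[F] F)),
      ∀ X Y Z : Matrix (Fin 2) (Fin 2) F,
        (X * Y * Z).trace = ∑ k : Fin 7, u k X * v k Y * w k Z :=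
  ⟨Strassen.leftForms F, Strassen.middleForms F, Strassen.rightForms F,
    Strassen.trace_mul_mul_eq_sum⟩
end

section
/- Let D be a 2×2 matrix over a field F with determinant 1 and trace -1 that is not a scalar multiple of the identity, let u be a column vector in F² such that u and Du are linearly independent, let u^⊥ be the unique row vector with u^⊥·u = 0 and u^⊥·(Du) = 1, and set M = u·u^⊥. Then the three matrices M, D⁻¹MD, and DMD⁻¹ form a basis of the F-vector space of traceless 2×2 matrices over F. -/
/-!
By Cayley–Hamilton `D ^ 2 + D + 1 = 0`, so `D⁻¹ = -(D + 1)`. Hence `M`, `D⁻¹ M D`, `D M D⁻¹`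
send `u` to `0`, `-u - D u`, `-D u`: in a vanishing combination the last two coefficients are
zero, and then so is the first because `M (D u) = u`. Conjugates of the traceless `M` are
traceless, and traceless `2 × 2` matrices form a space of dimension `3`.
-/

open Matrix

namespace Matrix

theorem finrank_ker_traceLinearMap (n K : Type*) [Fintype n] [Nonempty n] [Field K] :
    Module.finrank K (LinearMap.ker (traceLinearMap n K K)) = Fintype.card n ^ 2 - 1 := by
  have h := LinearMap.finrank_range_add_finrank_ker (traceLinearMap n K K)
  rw [LinearMap.range_eq_top.2 trace_surjective, finrank_top, Module.finrank_self,
    Module.finrank_matrix, Module.finrank_self, ← sq] at h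
  omega

theorem trace_conj_of_isUnit_det {n R : Type*} [Fintype n] [DecidableEq n] [CommRing R]
    {D : Matrix n n R} (hD : IsUnit D.det) (M : Matrix n n R) :
    (D⁻¹ * M * D).trace = M.trace ∧ (D * M * D⁻¹).trace = M.trace := by
  rw [trace_mul_cycle, mul_nonsing_inv D hD, one_mul, trace_mul_cycle, nonsing_inv_mul D hD,
    one_mul]
  exact ⟨rfl, rfl⟩

variable {n R : Type*} [Fintype n] [DecidableEq n] [CommRing R]

theorem sq_sub_trace_smul_add_det_smul_fin_two [Nontrivial R] (A : Matrix (Fin 2) (Fin 2) R) :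
    A ^ 2 - A.trace • A + A.det • (1 : Matrix (Fin 2) (Fin 2) R) = 0 := by
  simpa [charpoly_fin_two, Algebra.smul_def] using aeval_self_charpoly A

theorem inv_eq_neg_add_one_of_sq_add_self_add_one {D : Matrix n n R} (hD : D ^ 2 + D + 1 = 0) :
    D⁻¹ = -(D + 1) :=
  inv_eq_right_inv <| by
    rw [mul_neg, mul_add, mul_one, ← sq, ← neg_eq_of_add_eq_zero_left hD, neg_neg]

section Conjugates

variable {D M : Matrix n n R} {u : n → R}

theorem inv_mul_mul_mulVec_of_mulVec_eq (hD : D ^ 2 + D + 1 = 0) (hMv : M *ᵥ (D *ᵥ u) = u) :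
    (D⁻¹ * M * D) *ᵥ u = -u - D *ᵥ u := by
  rw [← mulVec_mulVec, ← mulVec_mulVec, hMv, inv_eq_neg_add_one_of_sq_add_self_add_one hD,
    neg_mulVec, add_mulVec, one_mulVec]
  abel

theorem mul_mul_inv_mulVec_of_mulVec_eq (hD : D ^ 2 + D + 1 = 0) (hMu : M *ᵥ u = 0)
    (hMv : M *ᵥ (D *ᵥ u) = u) : (D * M * D⁻¹) *ᵥ u = -(D *ᵥ u) := by
  rw [← mulVec_mulVec, ← mulVec_mulVec, inv_eq_neg_add_one_of_sq_add_self_add_one hD,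
    neg_mulVec, add_mulVec, one_mulVec, mulVec_neg, mulVec_add, hMu, hMv, add_zero, mulVec_neg]

theorem linearIndependent_conj_inv_conj (hD : D ^ 2 + D + 1 = 0) (hMu : M *ᵥ u = 0)
    (hMv : M *ᵥ (D *ᵥ u) = u) (hu : LinearIndependent R ![u, D *ᵥ u]) :
    LinearIndependent R ![M, D⁻¹ * M * D, D * M * D⁻¹] := by
  rw [Fintype.linearIndependent_iff]
  intro c hc
  simp only [Fin.sum_univ_three, Matrix.cons_val] at hc
  have hcu := congr_arg (· *ᵥ u) hc
  simp only [add_mulVec, smul_mulVec, zero_mulVec, hMu, inv_mul_mul_mulVec_of_mulVec_eq hD hMv,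
    mul_mul_inv_mulVec_of_mulVec_eq hD hMu hMv] at hcu
  obtain ⟨h1, h12⟩ := LinearIndependent.pair_iff.1 hu (-c 1) (-c 1 - c 2) (by rw [← hcu]; module)
  have hc1 : c 1 = 0 := neg_eq_zero.1 h1
  have hc2 : c 2 = 0 := by simpa [hc1] using h12
  rw [hc1, hc2, zero_smul, zero_smul, add_zero, add_zero] at hc
  have hcv := congr_arg (· *ᵥ (D *ᵥ u)) hc
  simp only [smul_mulVec, zero_mulVec, hMv] at hcv
  have hc0 : c 0 = 0 := (LinearIndependent.pair_iff.1 hu (c 0) 0 (by simpa using hcv)).1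
  intro i
  fin_cases i <;> assumption

end Conjugates

end Matrix

theorem conjugates_basis_traceless_general {F : Type*} [Field F] (D : Matrix (Fin 2) (Fin 2) F)
    (hdet : D.det = 1) (htr : D.trace = -1)
    (u : Fin 2 → F) (hli : LinearIndependent F ![u, D.mulVec u])
    (up : Fin 2 → F) (h0 : up ⬝ᵥ u = 0) (h1 : up ⬝ᵥ D.mulVec u = 1)
    (M : Matrix (Fin 2) (Fin 2) F) (hM : M = vecMulVec u up) :
    LinearIndependent F ![M, D⁻¹ * M * D, D * M * D⁻¹] ∧
      Submodule.span F (Set.range ![M, D⁻¹ * M * D, D * M * D⁻¹]) =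
        LinearMap.ker (Matrix.traceLinearMap (Fin 2) F F) := by
  have hD : D ^ 2 + D + 1 = 0 := by
    simpa [htr, hdet] using sq_sub_trace_smul_add_det_smul_fin_two D
  have hMu : M *ᵥ u = 0 := by
    rw [hM, vecMulVec_mulVec, h0, MulOpposite.op_zero, zero_smul]
  have hMv : M *ᵥ (D *ᵥ u) = u := by
    rw [hM, vecMulVec_mulVec, h1, MulOpposite.op_one, one_smul]
  have hind := linearIndependent_conj_inv_conj hD hMu hMv hli
  have htrM : M.trace = 0 := by rw [hM, trace_vecMulVec, dotProduct_comm, h0]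
  have hconj := trace_conj_of_isUnit_det (hdet ▸ isUnit_one : IsUnit D.det) M
  have hle : Submodule.span F (Set.range ![M, D⁻¹ * M * D, D * M * D⁻¹]) ≤
      LinearMap.ker (traceLinearMap (Fin 2) F F) := by
    rw [Submodule.span_le, Set.range_subset_iff]
    intro i
    fin_cases i <;> simp [hconj, htrM]
  refine ⟨hind, Submodule.eq_of_le_of_finrank_eq hle ?_⟩
  rw [finrank_span_eq_card hind, finrank_ker_traceLinearMap]
  rfl

/-- M, D⁻¹MD, DMD⁻¹ form a basis of the space of traceless 2×2 matrices. -/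
theorem conjugates_basis_traceless {F : Type*} [Field F] (D : Matrix (Fin 2) (Fin 2) F)
    (hdet : D.det = 1) (htr : D.trace = -1) (hnotscalar : ∀ c : F, D ≠ c • (1 : Matrix (Fin 2) (Fin 2) F))
    (u : Fin 2 → F) (hli : LinearIndependent F ![u, D.mulVec u])
    (up : Fin 2 → F) (h0 : up ⬝ᵥ u = 0) (h1 : up ⬝ᵥ D.mulVec u = 1)
    (M : Matrix (Fin 2) (Fin 2) F) (hM : M = vecMulVec u up) :
    LinearIndependent F ![M, D⁻¹ * M * D, D * M * D⁻¹] ∧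
      Submodule.span F (Set.range ![M, D⁻¹ * M * D, D * M * D⁻¹]) =
        LinearMap.ker (Matrix.traceLinearMap (Fin 2) F F) :=
  conjugates_basis_traceless_general D hdet htr u hli up h0 h1 M hM
end

section
/- Let D be a 2×2 matrix over a field F with determinant 1 and trace -1 that is not a scalar multiple of the identity, let u be a column vector in F² such that u and Du are linearly independent, let u^⊥ be the unique row vector with u^⊥·u = 0 and u^⊥·(Du) = 1, and set M = u·u^⊥. Then the four matrices D, M, D⁻¹MD, DMD⁻¹ form a basis of the F-vector space of all 2×2 matrices over F, and the four matrices D⁻¹, M, D⁻¹MD, DMD⁻¹ also form a basis of this space. -/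
/-!
By Cayley–Hamilton, `D² + D + 1 = 0`, so `D⁻¹ = -(D + 1)`. Writing `v = D u`, the matrix `D` acts
by `u ↦ v, v ↦ -u - v` and `M` by `u ↦ 0, v ↦ u`, which determines how every matrix of both families
acts on the basis `u, v` of `F²`. Evaluating a vanishing linear combination at `u` and at `v` and
comparing coefficients gives a linear system forcing all coefficients to vanish; four independent
matrices span the four-dimensional space of `2 × 2` matrices.
-/

open Matrix

namespace Matrix

variable {F : Type*} [Field F] {D M : Matrix (Fin 2) (Fin 2) F} {u : Fin 2 → F}

theorem mul_self_eq_neg_sub_one (hdet : D.det = 1) (htr : D.trace = -1) :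
    D * D = -D - 1 := by
  have hCH := D.aeval_self_charpoly
  rw [charpoly_fin_two, hdet, htr] at hCH
  simp only [map_add, Polynomial.aeval_X, map_mul, map_neg, map_one, neg_one_mul,
    sub_neg_eq_add, sq] at hCH
  rw [← sub_eq_zero, ← hCH]
  abel

theorem inv_eq_neg_add_one (hdet : D.det = 1) (htr : D.trace = -1) : D⁻¹ = -(D + 1) := by
  apply inv_eq_right_inv
  rw [mul_neg, mul_add, mul_one, mul_self_eq_neg_sub_one hdet htr]
  abel

theorem mulVec_mulVec_self (hdet : D.det = 1) (htr : D.trace = -1) (u : Fin 2 → F) :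
    D *ᵥ (D *ᵥ u) = -u - D *ᵥ u := by
  rw [mulVec_mulVec, mul_self_eq_neg_sub_one hdet htr, sub_mulVec, neg_mulVec, one_mulVec]
  abel

theorem inv_mulVec (hdet : D.det = 1) (htr : D.trace = -1) (u : Fin 2 → F) :
    D⁻¹ *ᵥ u = -u - D *ᵥ u := by
  rw [inv_eq_neg_add_one hdet htr, neg_mulVec, add_mulVec, one_mulVec]
  abel

theorem inv_mulVec_mulVec_self (hdet : D.det = 1) (u : Fin 2 → F) :
    D⁻¹ *ᵥ (D *ᵥ u) = u := by
  rw [mulVec_mulVec, nonsing_inv_mul _ (by simp [hdet]), one_mulVec]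

theorem linearIndependent_self_conj (hdet : D.det = 1) (htr : D.trace = -1)
    (hli : LinearIndependent F ![u, D *ᵥ u]) (hMu : M *ᵥ u = 0) (hMv : M *ᵥ (D *ᵥ u) = u) :
    LinearIndependent F ![D, M, D⁻¹ * M * D, D * M * D⁻¹] := by
  rw [Fintype.linearIndependent_iff]
  intro g hg
  simp only [Fin.sum_univ_four, cons_val_zero, cons_val_one, head_cons, cons_val_two, tail_cons,
    cons_val_three] at hg
  have at_u := congrArg (· *ᵥ u) hg
  have at_v := congrArg (· *ᵥ (D *ᵥ u)) hg
  simp only [add_mulVec, smul_mulVec, zero_mulVec, ← mulVec_mulVec, hMu, hMv,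
    mulVec_mulVec_self hdet htr u, inv_mulVec hdet htr u, inv_mulVec_mulVec_self hdet u,
    mulVec_neg, mulVec_sub, mulVec_zero] at at_u at_v
  obtain ⟨hu₁, hu₂⟩ := LinearIndependent.pair_iff.mp hli (-g 2) (g 0 - g 2 - g 3)
    (by linear_combination (norm := module) at_u)
  obtain ⟨hv₁, hv₂⟩ := LinearIndependent.pair_iff.mp hli (g 1 + g 2 - g 0) (g 2 - g 0)
    (by linear_combination (norm := module) at_v)
  intro i
  fin_cases i <;> simp only [Fin.zero_eta, Fin.mk_one, Fin.reduceFinMk]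
  · linear_combination -hu₁ - hv₂
  · linear_combination hv₁ - hv₂
  · linear_combination -hu₁
  · linear_combination -hu₂ - hv₂

theorem linearIndependent_inv_conj (hdet : D.det = 1) (htr : D.trace = -1)
    (hli : LinearIndependent F ![u, D *ᵥ u]) (hMu : M *ᵥ u = 0) (hMv : M *ᵥ (D *ᵥ u) = u) :
    LinearIndependent F ![D⁻¹, M, D⁻¹ * M * D, D * M * D⁻¹] := by
  rw [Fintype.linearIndependent_iff]
  intro g hg
  simp only [Fin.sum_univ_four, cons_val_zero, cons_val_one, head_cons, cons_val_two, tail_cons,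
    cons_val_three] at hg
  have at_u := congrArg (· *ᵥ u) hg
  have at_v := congrArg (· *ᵥ (D *ᵥ u)) hg
  simp only [add_mulVec, smul_mulVec, zero_mulVec, ← mulVec_mulVec, hMu, hMv,
    mulVec_mulVec_self hdet htr u, inv_mulVec hdet htr u, inv_mulVec_mulVec_self hdet u,
    mulVec_neg, mulVec_sub, mulVec_zero] at at_u at_v
  obtain ⟨hu₁, hu₂⟩ := LinearIndependent.pair_iff.mp hli (-g 0 - g 2) (-g 0 - g 2 - g 3)
    (by linear_combination (norm := module) at_u)
  obtain ⟨hv₁, hv₂⟩ := LinearIndependent.pair_iff.mp hli (g 0 + g 1 + g 2) (g 2)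
    (by linear_combination (norm := module) at_v)
  intro i
  fin_cases i <;> simp only [Fin.zero_eta, Fin.mk_one, Fin.reduceFinMk]
  · linear_combination -hu₁ - hv₂
  · linear_combination hv₁ + hu₁
  · exact hv₂
  · linear_combination hu₁ - hu₂

end Matrix

theorem two_bases_general {F : Type*} [Field F] (D : Matrix (Fin 2) (Fin 2) F)
    (hdet : D.det = 1) (htr : D.trace = -1)
    (u : Fin 2 → F) (hli : LinearIndependent F ![u, D.mulVec u])
    (up : Fin 2 → F) (h0 : up ⬝ᵥ u = 0) (h1 : up ⬝ᵥ D.mulVec u = 1)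
    (M : Matrix (Fin 2) (Fin 2) F) (hM : M = vecMulVec u up) :
    (LinearIndependent F ![D, M, D⁻¹ * M * D, D * M * D⁻¹] ∧
      Submodule.span F (Set.range ![D, M, D⁻¹ * M * D, D * M * D⁻¹]) = ⊤) ∧
    (LinearIndependent F ![D⁻¹, M, D⁻¹ * M * D, D * M * D⁻¹] ∧
      Submodule.span F (Set.range ![D⁻¹, M, D⁻¹ * M * D, D * M * D⁻¹]) = ⊤) := by
  have hMu : M *ᵥ u = 0 := by rw [hM, vecMulVec_mulVec, h0, MulOpposite.op_zero, zero_smul]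
  have hMv : M *ᵥ (D *ᵥ u) = u := by rw [hM, vecMulVec_mulVec, h1, MulOpposite.op_one, one_smul]
  have span_eq_top {X : Fin 4 → Matrix (Fin 2) (Fin 2) F} (hX : LinearIndependent F X) :
      Submodule.span F (Set.range X) = ⊤ :=
    hX.span_eq_top_of_card_eq_finrank (by simp [Module.finrank_matrix])
  have hfirst := linearIndependent_self_conj hdet htr hli hMu hMv
  have hsecond := linearIndependent_inv_conj hdet htr hli hMu hMv
  exact ⟨⟨hfirst, span_eq_top hfirst⟩, ⟨hsecond, span_eq_top hsecond⟩⟩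

/-- Both {D, M, D⁻¹MD, DMD⁻¹} and {D⁻¹, M, D⁻¹MD, DMD⁻¹} are bases of the space
of all 2×2 matrices. -/
theorem two_bases {F : Type*} [Field F] (D : Matrix (Fin 2) (Fin 2) F)
    (hdet : D.det = 1) (htr : D.trace = -1) (hnotscalar : ∀ c : F, D ≠ c • (1 : Matrix (Fin 2) (Fin 2) F))
    (u : Fin 2 → F) (hli : LinearIndependent F ![u, D.mulVec u])
    (up : Fin 2 → F) (h0 : up ⬝ᵥ u = 0) (h1 : up ⬝ᵥ D.mulVec u = 1)
    (M : Matrix (Fin 2) (Fin 2) F) (hM : M = vecMulVec u up) :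
    (LinearIndependent F ![D, M, D⁻¹ * M * D, D * M * D⁻¹] ∧
      Submodule.span F (Set.range ![D, M, D⁻¹ * M * D, D * M * D⁻¹]) = ⊤) ∧
    (LinearIndependent F ![D⁻¹, M, D⁻¹ * M * D, D * M * D⁻¹] ∧
      Submodule.span F (Set.range ![D⁻¹, M, D⁻¹ * M * D, D * M * D⁻¹]) = ⊤) :=
  two_bases_general D hdet htr u hli up h0 h1 M hM
end

section
/- Let D be a 2×2 matrix over a field F with determinant 1 and trace -1, let u be a column vector in F² such that u and Du are linearly independent, let u^⊥ be the unique row vector with u^⊥·u = 0 and u^⊥·(Du) = 1, and set M = u·u^⊥. Then the following six multiplication-table identities hold: M·(D⁻¹MD) = -MD, M·(DMD⁻¹) = MD⁻¹, (D⁻¹MD)·M = D⁻¹M, (D⁻¹MD)·(DMD⁻¹) = -D⁻¹MD⁻¹, (DMD⁻¹)·M = -DM, and (DMD⁻¹)·(D⁻¹MD) = DMD. -/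
/-!
Since `u^⊥ ⬝ u = 0`, every product `M A M` collapses to the scalar `u^⊥ ⬝ (A u)` times `M`; in
particular `M² = 0` and `M D M = M`. By Cayley–Hamilton `D² + D + 1 = 0`, so `D⁻¹ = D² = -D - 1`,
and after regrouping each entry of the table reduces to `M D M = M` or `M D⁻¹ M = -M`.
-/

open Matrix

section Ring

variable {R : Type*} [Ring R] {D E M : R}

theorem eq_neg_sub_one_of_mul_eq_one (hD : D * D + D + 1 = 0) (hDE : D * E = 1) :
    E = -D - 1 := by
  have hleft : (-D - 1) * D = 1 := by
    calc (-D - 1) * D = 1 - (D * D + D + 1) := by noncomm_ring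
      _ = 1 := by rw [hD, sub_zero]
  calc E = (-D - 1) * D * E := by rw [hleft, one_mul]
    _ = -D - 1 := by rw [mul_assoc, hDE, mul_one]

theorem mul_self_eq_right_of_mul_eq_one (hD : D * D + D + 1 = 0) (hDE : D * E = 1) :
    D * D = E := by
  rw [eq_neg_sub_one_of_mul_eq_one hD hDE]
  calc D * D = (D * D + D + 1) - D - 1 := by abel
    _ = -D - 1 := by rw [hD, zero_sub]

theorem mul_self_eq_left_of_mul_eq_one (hD : D * D + D + 1 = 0) (hDE : D * E = 1) :
    E * E = D := by
  calc E * E = D * D * E := by rw [mul_self_eq_right_of_mul_eq_one hD hDE]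
    _ = D := by rw [mul_assoc, hDE, mul_one]

theorem mul_mul_eq_neg_of_mul_self_eq_zero (hD : D * D + D + 1 = 0) (hDE : D * E = 1)
    (hM0 : M * M = 0) (hM1 : M * D * M = M) : M * E * M = -M := by
  rw [eq_neg_sub_one_of_mul_eq_one hD hDE]
  calc M * (-D - 1) * M = -(M * D * M) - M * M := by noncomm_ring
    _ = -M := by rw [hM0, hM1, sub_zero]

theorem mult_table_of_mul_self_add_add_one_eq_zero (hD : D * D + D + 1 = 0) (hDE : D * E = 1)
    (hM0 : M * M = 0) (hM1 : M * D * M = M) :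
    M * (E * M * D) = -(M * D) ∧
    M * (D * M * E) = M * E ∧
    (E * M * D) * M = E * M ∧
    (E * M * D) * (D * M * E) = -(E * M * E) ∧
    (D * M * E) * M = -(D * M) ∧
    (D * M * E) * (E * M * D) = D * M * D := by
  have hME : M * E * M = -M := mul_mul_eq_neg_of_mul_self_eq_zero hD hDE hM0 hM1
  refine ⟨?_, ?_, ?_, ?_, ?_, ?_⟩
  · calc M * (E * M * D) = (M * E * M) * D := by noncomm_ring
      _ = -(M * D) := by rw [hME, neg_mul]
  · calc M * (D * M * E) = (M * D * M) * E := by noncomm_ring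
      _ = M * E := by rw [hM1]
  · calc (E * M * D) * M = E * (M * D * M) := by noncomm_ring
      _ = E * M := by rw [hM1]
  · calc (E * M * D) * (D * M * E) = E * (M * (D * D) * M) * E := by noncomm_ring
      _ = -(E * M * E) := by rw [mul_self_eq_right_of_mul_eq_one hD hDE, hME]; noncomm_ring
  · calc (D * M * E) * M = D * (M * E * M) := by noncomm_ring
      _ = -(D * M) := by rw [hME, mul_neg]
  · calc (D * M * E) * (E * M * D) = D * (M * (E * E) * M) * D := by noncomm_ring
      _ = D * M * D := by rw [mul_self_eq_left_of_mul_eq_one hD hDE, hM1]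

end Ring

namespace Matrix

theorem vecMulVec_mul_mul_vecMulVec {m n α : Type*} [Fintype m] [Fintype n] [CommSemiring α]
    (u : m → α) (v : n → α) (A : Matrix n m α) :
    vecMulVec u v * A * vecMulVec u v = (v ⬝ᵥ A *ᵥ u) • vecMulVec u v := by
  rw [vecMulVec_mul, vecMulVec_mul_vecMulVec, vecMulVec_smul, dotProduct_mulVec]

theorem mul_self_sub_trace_smul_add_det_smul_eq_zero {R : Type*} [CommRing R] [Nontrivial R]
    (A : Matrix (Fin 2) (Fin 2) R) :
    A * A - A.trace • A + A.det • (1 : Matrix (Fin 2) (Fin 2) R) = 0 := by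
  have := A.aeval_self_charpoly
  rw [charpoly_fin_two] at this
  simpa [sq, Algebra.smul_def] using this

end Matrix

theorem mult_table_identities_general {F : Type*} [Field F] (D : Matrix (Fin 2) (Fin 2) F)
    (hdet : D.det = 1) (htr : D.trace = -1)
    (u : Fin 2 → F)
    (up : Fin 2 → F) (h0 : up ⬝ᵥ u = 0) (h1 : up ⬝ᵥ D.mulVec u = 1)
    (M : Matrix (Fin 2) (Fin 2) F) (hM : M = vecMulVec u up) :
    M * (D⁻¹ * M * D) = -(M * D) ∧
    M * (D * M * D⁻¹) = M * D⁻¹ ∧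
    (D⁻¹ * M * D) * M = D⁻¹ * M ∧
    (D⁻¹ * M * D) * (D * M * D⁻¹) = -(D⁻¹ * M * D⁻¹) ∧
    (D * M * D⁻¹) * M = -(D * M) ∧
    (D * M * D⁻¹) * (D⁻¹ * M * D) = D * M * D := by
  have hD : D * D + D + 1 = 0 := by
    simpa [hdet, htr, sub_eq_add_neg] using D.mul_self_sub_trace_smul_add_det_smul_eq_zero
  have hDE : D * D⁻¹ = 1 := D.mul_nonsing_inv (by rw [hdet]; exact isUnit_one)
  have hM0 : M * M = 0 := by
    rw [hM, vecMulVec_mul_vecMulVec, h0, zero_smul, vecMulVec_zero]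
  have hM1 : M * D * M = M := by
    rw [hM, vecMulVec_mul_mul_vecMulVec, h1, one_smul]
  exact mult_table_of_mul_self_add_add_one_eq_zero hD hDE hM0 hM1

/-- Six multiplication-table identities for M and its conjugates. -/
theorem mult_table_identities {F : Type*} [Field F] (D : Matrix (Fin 2) (Fin 2) F)
    (hdet : D.det = 1) (htr : D.trace = -1)
    (u : Fin 2 → F) (hli : LinearIndependent F ![u, D.mulVec u])
    (up : Fin 2 → F) (h0 : up ⬝ᵥ u = 0) (h1 : up ⬝ᵥ D.mulVec u = 1)
    (M : Matrix (Fin 2) (Fin 2) F) (hM : M = vecMulVec u up) :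
    M * (D⁻¹ * M * D) = -(M * D) ∧
    M * (D * M * D⁻¹) = M * D⁻¹ ∧
    (D⁻¹ * M * D) * M = D⁻¹ * M ∧
    (D⁻¹ * M * D) * (D * M * D⁻¹) = -(D⁻¹ * M * D⁻¹) ∧
    (D * M * D⁻¹) * M = -(D * M) ∧
    (D * M * D⁻¹) * (D⁻¹ * M * D) = D * M * D :=
  mult_table_identities_general D hdet htr u up h0 h1 M hM
end

section
/- Let D be a 2×2 matrix over a field F with determinant 1 and trace -1, let u be a column vector in F² such that u and Du are linearly independent, let u^⊥ be the unique row vector with u^⊥·u = 0 and u^⊥·(Du) = 1, and set M = u·u^⊥. For any scalars x₁, x₂, x₃, x₄, y₁, y₂, y₃, y₄ in F, if X = x₁D + x₂M + x₃D⁻¹MD + x₄DMD⁻¹ and Y = y₁D⁻¹ + y₂M + y₃D⁻¹MD + y₄DMD⁻¹, then X·Y = x₁y₁·id + x₂(y₁+y₄)·MD⁻¹ + x₃(y₁+y₂)·D⁻¹M + x₄(y₁+y₃)·DMD + (x₁-x₄)y₂·DM + (x₁-x₂)y₃·MD + (x₁-x₃)y₄·D⁻¹MD⁻¹. -/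
/-!
By Cayley–Hamilton, `tr D = -1` and `det D = 1` give `D² + D + 1 = 0`, so `D⁻¹ = -1 - D`, while
`u^⊥ u = 0` and `u^⊥ D u = 1` give `M² = 0` and `M D M = M`. These three relations reduce every
word in `D` and `M` to a combination of `1, D, M, DM, MD, DMD`, and both sides of the identity
expand to the same combination; the identity thus holds in any algebra with such `D` and `M`.
-/

open Matrix

theorem Matrix.sq_sub_trace_smul_add_det_smul_fin_two_s14 {R : Type*} [CommRing R] [Nontrivial R]
    (A : Matrix (Fin 2) (Fin 2) R) :
    A ^ 2 - A.trace • A + A.det • (1 : Matrix (Fin 2) (Fin 2) R) = 0 := by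
  simpa [charpoly_fin_two, Algebra.algebraMap_eq_smul_one] using A.aeval_self_charpoly

theorem Matrix.vecMulVec_mul_mul_vecMulVec_s14 {n R : Type*} [Fintype n] [CommRing R] (u v : n → R)
    (A : Matrix n n R) : vecMulVec u v * A * vecMulVec u v = (v ⬝ᵥ A *ᵥ u) • vecMulVec u v := by
  rw [vecMulVec_mul, vecMulVec_mul_vecMulVec, vecMulVec_smul, dotProduct_mulVec]

theorem strassen_product_formula {K A : Type*} [CommRing K] [Ring A] [Algebra K A] {d e m : A}
    (hd : d * d + d + 1 = 0) (hde : d * e = 1) (hm : m * m = 0) (hmdm : m * d * m = m)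
    (x₁ x₂ x₃ x₄ y₁ y₂ y₃ y₄ : K) :
    (x₁ • d + x₂ • m + x₃ • (e * m * d) + x₄ • (d * m * e)) *
        (y₁ • e + y₂ • m + y₃ • (e * m * d) + y₄ • (d * m * e)) =
      (x₁ * y₁) • (1 : A) + (x₂ * (y₁ + y₄)) • (m * e) + (x₃ * (y₁ + y₂)) • (e * m)
        + (x₄ * (y₁ + y₃)) • (d * m * d) + ((x₁ - x₄) * y₂) • (d * m)
        + ((x₁ - x₂) * y₃) • (m * d) + ((x₁ - x₃) * y₄) • (e * m * e) := by
  have he : e = -1 - d :=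
    calc e = (d * d + d + 1) * e - 1 - d := by rw [add_mul, add_mul, mul_assoc, hde]; noncomm_ring
      _ = -1 - d := by rw [hd, zero_mul, zero_sub]
  subst he
  -- right-associated forms, so that `simp` can rewrite inside products
  have hdd : d * d = -1 - d := sub_eq_zero.mp (by rw [← hd]; abel)
  have hdd' (a : A) : d * (d * a) = -a - d * a := by rw [← mul_assoc, hdd]; noncomm_ring
  have hmm' (a : A) : m * (m * a) = 0 := by rw [← mul_assoc, hm, zero_mul]
  have hmdm₀ : m * (d * m) = m := by rw [← mul_assoc, hmdm]
  have hmdm' (a : A) : m * (d * (m * a)) = m * a := by rw [← mul_assoc, ← mul_assoc, hmdm]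
  simp only [mul_add, add_mul, mul_sub, sub_mul, neg_mul, mul_neg, mul_one, one_mul,
    smul_add, smul_sub, smul_neg, smul_smul, mul_smul_comm, smul_mul_assoc, mul_assoc,
    hdd, hdd', hm, hmm', hmdm₀, hmdm', mul_zero, smul_zero, add_zero]
  module

theorem seven_term_decomposition_general {F : Type*} [Field F] (D : Matrix (Fin 2) (Fin 2) F)
    (hdet : D.det = 1) (htr : D.trace = -1)
    (u : Fin 2 → F)
    (up : Fin 2 → F) (h0 : up ⬝ᵥ u = 0) (h1 : up ⬝ᵥ D.mulVec u = 1)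
    (M : Matrix (Fin 2) (Fin 2) F) (hM : M = vecMulVec u up)
    (x₁ x₂ x₃ x₄ y₁ y₂ y₃ y₄ : F)
    (X Y : Matrix (Fin 2) (Fin 2) F)
    (hX : X = x₁ • D + x₂ • M + x₃ • (D⁻¹ * M * D) + x₄ • (D * M * D⁻¹))
    (hY : Y = y₁ • D⁻¹ + y₂ • M + y₃ • (D⁻¹ * M * D) + y₄ • (D * M * D⁻¹)) :
    X * Y = (x₁ * y₁) • (1 : Matrix (Fin 2) (Fin 2) F)
      + (x₂ * (y₁ + y₄)) • (M * D⁻¹)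
      + (x₃ * (y₁ + y₂)) • (D⁻¹ * M)
      + (x₄ * (y₁ + y₃)) • (D * M * D)
      + ((x₁ - x₄) * y₂) • (D * M)
      + ((x₁ - x₂) * y₃) • (M * D)
      + ((x₁ - x₃) * y₄) • (D⁻¹ * M * D⁻¹) := by
  have hD : D * D + D + 1 = 0 := by
    simpa [hdet, htr, sq] using D.sq_sub_trace_smul_add_det_smul_fin_two_s14
  have hDinv : D * D⁻¹ = 1 := mul_nonsing_inv D (by simp [hdet])
  have hMM : M * M = 0 := by
    rw [hM, vecMulVec_mul_vecMulVec, h0, zero_smul, vecMulVec_zero]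
  have hMDM : M * D * M = M := by
    rw [hM, vecMulVec_mul_mul_vecMulVec_s14, h1, one_smul]
  subst hX hY
  exact strassen_product_formula hD hDinv hMM hMDM x₁ x₂ x₃ x₄ y₁ y₂ y₃ y₄

/-- The explicit 7-term decomposition of the product XY underlying Strassen's algorithm. -/
theorem seven_term_decomposition {F : Type*} [Field F] (D : Matrix (Fin 2) (Fin 2) F)
    (hdet : D.det = 1) (htr : D.trace = -1)
    (u : Fin 2 → F) (hli : LinearIndependent F ![u, D.mulVec u])
    (up : Fin 2 → F) (h0 : up ⬝ᵥ u = 0) (h1 : up ⬝ᵥ D.mulVec u = 1)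
    (M : Matrix (Fin 2) (Fin 2) F) (hM : M = vecMulVec u up)
    (x₁ x₂ x₃ x₄ y₁ y₂ y₃ y₄ : F)
    (X Y : Matrix (Fin 2) (Fin 2) F)
    (hX : X = x₁ • D + x₂ • M + x₃ • (D⁻¹ * M * D) + x₄ • (D * M * D⁻¹))
    (hY : Y = y₁ • D⁻¹ + y₂ • M + y₃ • (D⁻¹ * M * D) + y₄ • (D * M * D⁻¹)) :
    X * Y = (x₁ * y₁) • (1 : Matrix (Fin 2) (Fin 2) F)
      + (x₂ * (y₁ + y₄)) • (M * D⁻¹)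
      + (x₃ * (y₁ + y₂)) • (D⁻¹ * M)
      + (x₄ * (y₁ + y₃)) • (D * M * D)
      + ((x₁ - x₄) * y₂) • (D * M)
      + ((x₁ - x₂) * y₃) • (M * D)
      + ((x₁ - x₃) * y₄) • (D⁻¹ * M * D⁻¹) :=
  seven_term_decomposition_general D hdet htr u up h0 h1 M hM x₁ x₂ x₃ x₄ y₁ y₂ y₃ y₄ X Y hX hY
end
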